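/- G_{V_↑} is the intersection of all finite-valued first-order Gödel logics: a sentence is valid in G_{V_↑} if and only if it is valid in G_{V_m} for every m ≥ 2. -/

import Mathlib

namespace GodelPaper

/-- A first-order language: function and relation symbols of each arity. -/
structure Lang where
  Func : ℕ → Type
  Rel : ℕ → Type

/-- A Gödel set: a closed subset of [0,1] containing 0 and 1. -/
def GodelSet (V : Set ℝ) : Prop :=
  IsClosed V ∧ V ⊆ Set.Icc 0 1 ∧ (0:ℝ) ∈ V ∧ (1:ℝ) ∈ V

/-- Terms with variables from `α`. -/
inductive Term (L : Lang) (α : Type) : Type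
  | var : α → Term L α
  | func : ∀ {k}, L.Func k → (Fin k → Term L α) → Term L α

/-- A `V`-interpretation: nonempty domain, interpretation of function symbols,
and truth values in `V` for atomic sentences with parameters. -/
structure Interp (L : Lang) (V : Set ℝ) where
  Dom : Type
  dom_nonempty : Nonempty Dom
  funMap : ∀ {k}, L.Func k → (Fin k → Dom) → Dom
  relVal : ∀ {k}, L.Rel k → (Fin k → Dom) → ℝ
  relVal_mem : ∀ {k} (R : L.Rel k) (v : Fin k → Dom), relVal R v ∈ V

def Term.eval {L : Lang} {V : Set ℝ} (I : Interp L V) {α : Type} (v : α → I.Dom) :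
    Term L α → I.Dom
  | .var i => v i
  | .func f ts => I.funMap f fun j => Term.eval I v (ts j)

/-- Formulas of the Δ-extended language, with free variables among `Fin n`.
The quantifiers bind the *last* variable. Δ-free formulas (i.e. formulas of the
plain language) are singled out by the predicate `DeltaFree` below. -/
inductive Form (L : Lang) : ℕ → Type
  | falsum : ∀ {n}, Form L n
  | atom : ∀ {n k}, L.Rel k → (Fin k → Term L (Fin n)) → Form L n
  | conj : ∀ {n}, Form L n → Form L n → Form L n
  | disj : ∀ {n}, Form L n → Form L n → Form L n
  | impl : ∀ {n}, Form L n → Form L n → Form L n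
  | delta : ∀ {n}, Form L n → Form L n
  | all : ∀ {n}, Form L (n+1) → Form L n
  | ex : ∀ {n}, Form L (n+1) → Form L n

/-- The Gödel truth value of a formula under an interpretation and an
assignment of the free variables. -/
noncomputable def Form.val {L : Lang} {V : Set ℝ} (I : Interp L V) :
    ∀ {n}, Form L n → (Fin n → I.Dom) → ℝ
  | _, .falsum, _ => 0
  | _, .atom R ts, ρ => I.relVal R fun j => Term.eval I ρ (ts j)
  | _, .conj A B, ρ => min (Form.val I A ρ) (Form.val I B ρ)
  | _, .disj A B, ρ => max (Form.val I A ρ) (Form.val I B ρ)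
  | _, .impl A B, ρ => if Form.val I A ρ ≤ Form.val I B ρ then 1 else Form.val I B ρ
  | _, .delta A, ρ => if Form.val I A ρ = 1 then 1 else 0
  | _, .all A, ρ => sInf {v : ℝ | ∃ d : I.Dom, v = Form.val I A (Fin.snoc ρ d)}
  | _, .ex A, ρ => sSup {v : ℝ | ∃ d : I.Dom, v = Form.val I A (Fin.snoc ρ d)}

/-- The value of a sentence. -/
noncomputable def Form.sval {L : Lang} {V : Set ℝ} (I : Interp L V) (A : Form L 0) : ℝ :=
  Form.val I A Fin.elim0

/-- `A` is valid in `G_V`. -/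
def Valid {L : Lang} (V : Set ℝ) (A : Form L 0) : Prop :=
  ∀ I : Interp L V, Form.sval I A = 1

/-- `A` is 1-satisfiable in `G_V`. -/
def OneSat {L : Lang} (V : Set ℝ) (A : Form L 0) : Prop :=
  ∃ I : Interp L V, Form.sval I A = 1

/-- `A` is classically satisfiable: it takes value 1 under a `V`-interpretation
assigning only values in {0,1} to atomic sentences. -/
def ClassSat {L : Lang} (V : Set ℝ) (A : Form L 0) : Prop :=
  ∃ I : Interp L V,
    (∀ {k : ℕ} (R : L.Rel k) (v : Fin k → I.Dom), I.relVal R v = 0 ∨ I.relVal R v = 1) ∧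
    Form.sval I A = 1

/-- ¬A abbreviates A ⊃ ⊥. -/
def Form.not {L : Lang} {n : ℕ} (A : Form L n) : Form L n := Form.impl A Form.falsum

/-- A ↔ B abbreviates (A ⊃ B) ∧ (B ⊃ A). -/
def Form.iff {L : Lang} {n : ℕ} (A B : Form L n) : Form L n :=
  Form.conj (Form.impl A B) (Form.impl B A)

/-- Formulas of the plain language (no Δ). -/
def DeltaFree {L : Lang} : ∀ {n}, Form L n → Prop
  | _, .falsum => True
  | _, .atom _ _ => True
  | _, .conj A B => DeltaFree A ∧ DeltaFree B
  | _, .disj A B => DeltaFree A ∧ DeltaFree B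
  | _, .impl A B => DeltaFree A ∧ DeltaFree B
  | _, .delta _ => False
  | _, .all A => DeltaFree A
  | _, .ex A => DeltaFree A

/-- Quantifier-free formulas. -/
def QuantFree {L : Lang} : ∀ {n}, Form L n → Prop
  | _, .falsum => True
  | _, .atom _ _ => True
  | _, .conj A B => QuantFree A ∧ QuantFree B
  | _, .disj A B => QuantFree A ∧ QuantFree B
  | _, .impl A B => QuantFree A ∧ QuantFree B
  | _, .delta A => QuantFree A
  | _, .all _ => False
  | _, .ex _ => False

/-- Formulas containing no universal quantifier. -/
def AllFree {L : Lang} : ∀ {n}, Form L n → Prop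
  | _, .falsum => True
  | _, .atom _ _ => True
  | _, .conj A B => AllFree A ∧ AllFree B
  | _, .disj A B => AllFree A ∧ AllFree B
  | _, .impl A B => AllFree A ∧ AllFree B
  | _, .delta A => AllFree A
  | _, .all _ => False
  | _, .ex A => AllFree A

/-- Prenex formulas: a block of quantifiers followed by a quantifier-free matrix. -/
inductive IsPrenex {L : Lang} : ∀ {n}, Form L n → Prop
  | qf {n} {A : Form L n} : QuantFree A → IsPrenex A
  | all {n} {A : Form L (n+1)} : IsPrenex A → IsPrenex (Form.all A)
  | ex {n} {A : Form L (n+1)} : IsPrenex A → IsPrenex (Form.ex A)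

/-- Purely existential prenex formulas. -/
inductive ExPrenex {L : Lang} : ∀ {n}, Form L n → Prop
  | qf {n} {A : Form L n} : QuantFree A → ExPrenex A
  | ex {n} {A : Form L (n+1)} : ExPrenex A → ExPrenex (Form.ex A)

/-- The glued interpretation `I_ω`: atoms with value ≤ ω keep their value,
all other atoms get value 1. Same domain and function interpretations. -/
noncomputable def Interp.glue {L : Lang} {V : Set ℝ} (I : Interp L V) (ω : ℝ)
    (h1 : (1:ℝ) ∈ V) : Interp L V where
  Dom := I.Dom
  dom_nonempty := I.dom_nonempty
  funMap := fun {k} f v => I.funMap f v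
  relVal := fun {k} R v => if I.relVal R v ≤ ω then I.relVal R v else 1
  relVal_mem := fun {k} R v => by
    by_cases h : I.relVal R v ≤ ω
    · simpa [h] using I.relVal_mem R v
    · simpa [h] using h1

/-- The Gödel set `V_↑ = {1 - 1/k : k ≥ 1} ∪ {1}`. -/
def Vup : Set ℝ := {x : ℝ | ∃ k : ℕ, 1 ≤ k ∧ x = 1 - 1/(k:ℝ)} ∪ {1}

/-- The `m`-element Gödel set `V_m = {1 - 1/k : 1 ≤ k ≤ m-1} ∪ {1}`. -/
def Vfin (m : ℕ) : Set ℝ :=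
  {x : ℝ | ∃ k : ℕ, 1 ≤ k ∧ k ≤ m - 1 ∧ x = 1 - 1/(k:ℝ)} ∪ {1}

/-- Atomic formula built from a unary predicate. -/
def atom1 {L : Lang} (P : L.Rel 1) {n : ℕ} (t : Term L (Fin n)) : Form L n :=
  Form.atom P fun _ => t

/-- Atomic formula built from a 0-ary predicate (propositional atom). -/
def atom0 {L : Lang} (X : L.Rel 0) {n : ℕ} : Form L n :=
  Form.atom X fun i => i.elim0

def Term.rename {L : Lang} {α β : Type} (f : α → β) : Term L α → Term L β
  | .var i => .var (f i)
  | .func g ts => .func g fun j => Term.rename f (ts j)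

def Form.rename {L : Lang} : ∀ {m n}, (Fin m → Fin n) → Form L m → Form L n
  | _, _, _, .falsum => .falsum
  | _, _, f, .atom R ts => .atom R fun j => (ts j).rename f
  | _, _, f, .conj A B => .conj (A.rename f) (B.rename f)
  | _, _, f, .disj A B => .disj (A.rename f) (B.rename f)
  | _, _, f, .impl A B => .impl (A.rename f) (B.rename f)
  | _, _, f, .delta A => .delta (A.rename f)
  | _, _, f, .all A =>
      .all (A.rename (Fin.lastCases (Fin.last _) fun i => Fin.castSucc (f i)))
  | _, _, f, .ex A =>
      .ex (A.rename (Fin.lastCases (Fin.last _) fun i => Fin.castSucc (f i)))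

/-- Weakening: regard a formula with `n` free variables as one with `n+1`
free variables (not using the new last variable). -/
def Form.lift {L : Lang} {n : ℕ} (A : Form L n) : Form L (n+1) :=
  A.rename Fin.castSucc

def Term.subst {L : Lang} {α β : Type} (σ : α → Term L β) : Term L α → Term L β
  | .var i => σ i
  | .func g ts => .func g fun j => Term.subst σ (ts j)

def Form.subst {L : Lang} : ∀ {m n}, (Fin m → Term L (Fin n)) → Form L m → Form L n
  | _, _, _, .falsum => .falsum
  | _, _, σ, .atom R ts => .atom R fun j => (ts j).subst σ
  | _, _, σ, .conj A B => .conj (A.subst σ) (B.subst σ)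
  | _, _, σ, .disj A B => .disj (A.subst σ) (B.subst σ)
  | _, _, σ, .impl A B => .impl (A.subst σ) (B.subst σ)
  | _, _, σ, .delta A => .delta (A.subst σ)
  | _, _, σ, .all A =>
      .all (A.subst (Fin.lastCases (.var (Fin.last _))
        fun i => (σ i).rename Fin.castSucc))
  | _, _, σ, .ex A =>
      .ex (A.subst (Fin.lastCases (.var (Fin.last _))
        fun i => (σ i).rename Fin.castSucc))

/-- The language `L ∪ {f}` with one new function symbol of arity `a`. -/
def Lang.addFunc (L : Lang) (a : ℕ) : Lang where
  Func := fun k => L.Func k ⊕ PLift (k = a)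
  Rel := L.Rel

/-- The new function symbol of `L.addFunc a`. -/
def newFunc (L : Lang) (a : ℕ) : (L.addFunc a).Func a := Sum.inr ⟨rfl⟩

def Term.emb {L : Lang} {a : ℕ} {α : Type} : Term L α → Term (L.addFunc a) α
  | .var i => .var i
  | .func g ts => .func (Sum.inl g) fun j => Term.emb (ts j)

/-- Embedding of `L`-formulas into the language with the extra function symbol. -/
def Form.emb {L : Lang} {a : ℕ} : ∀ {n}, Form L n → Form (L.addFunc a) n
  | _, .falsum => .falsum
  | _, .atom R ts => .atom R fun j => (ts j).emb
  | _, .conj A B => .conj A.emb B.emb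
  | _, .disj A B => .disj A.emb B.emb
  | _, .impl A B => .impl A.emb B.emb
  | _, .delta A => .delta A.emb
  | _, .all A => .all A.emb
  | _, .ex A => .ex A.emb

/-- Prefix of `n` existential quantifiers (outermost quantifier binds variable 0). -/
def Form.exN {L : Lang} : ∀ n, Form L n → Form L 0
  | 0, A => A
  | n+1, A => Form.exN n (Form.ex A)

/-- Prefix of `n` universal quantifiers (outermost quantifier binds variable 0). -/
def Form.allN {L : Lang} : ∀ n, Form L n → Form L 0
  | 0, A => A
  | n+1, A => Form.allN n (Form.all A)

/-! Every `V_m`-interpretation is a `V_↑`-interpretation. Conversely, if `I(A) = ω = 1 - 1/k < 1`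
for a `V_↑`-interpretation `I`, the glued interpretation `I_ω` sends every atom above `ω` to `1` and
so lives in `V_{k+1}`. The map `x ↦ if x ≤ ω then x else 1` commutes with the Gödel connectives
on Δ-free formulas, with suprema, and with infima as long as they are attained, which they are in
`V_↑` since it accumulates only at `1`. Hence `I_ω(A) = ω`, and `A` fails in `G_{V_{k+1}}`. -/

noncomputable def collapse (ω x : ℝ) : ℝ := if x ≤ ω then x else 1

lemma collapse_monotone {ω : ℝ} (hω : ω ≤ 1) : Monotone (collapse ω) := by
  intro x y hxy
  unfold collapse
  split_ifs <;> linarith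

lemma collapse_csSup {ω : ℝ} (hω : ω < 1) {S : Set ℝ} (hne : S.Nonempty) (hbdd : BddAbove S) :
    sSup (collapse ω '' S) = collapse ω (sSup S) := by
  by_cases hSω : sSup S ≤ ω
  · have hfix : Set.EqOn (collapse ω) id S := fun x hx =>
      if_pos ((le_csSup hbdd hx).trans hSω)
    rw [hfix.image_eq_self, collapse, if_pos hSω]
  · obtain ⟨s, hs, hωs⟩ := exists_lt_of_lt_csSup hne (not_le.mp hSω)
    have hle : ∀ y ∈ collapse ω '' S, y ≤ 1 := by
      rintro _ ⟨t, -, rfl⟩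
      unfold collapse
      split_ifs <;> linarith
    rw [collapse, if_neg hSω]
    refine le_antisymm (csSup_le (hne.image _) hle) (le_csSup ⟨1, hle⟩ ⟨s, hs, ?_⟩)
    rw [collapse, if_neg (not_le.mpr hωs)]

def Interp.valueSet {L : Lang} {V : Set ℝ} (I : Interp L V) {n : ℕ} (A : Form L (n + 1))
    (ρ : Fin n → I.Dom) : Set ℝ :=
  {v | ∃ d : I.Dom, v = Form.val I A (Fin.snoc ρ d)}

section valueSet

variable {L : Lang} {V : Set ℝ} (I : Interp L V) {n : ℕ} (ρ : Fin n → I.Dom)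

lemma Form.val_all (A : Form L (n + 1)) :
    Form.val I (.all A) ρ = sInf (I.valueSet A ρ) := rfl

lemma Form.val_ex (A : Form L (n + 1)) :
    Form.val I (.ex A) ρ = sSup (I.valueSet A ρ) := rfl

lemma Interp.valueSet_nonempty (A : Form L (n + 1)) : (I.valueSet A ρ).Nonempty :=
  let ⟨d⟩ := I.dom_nonempty
  ⟨_, d, rfl⟩

lemma Interp.valueSet_subset {A : Form L (n + 1)} {W : Set ℝ}
    (hA : ∀ σ, Form.val I A σ ∈ W) : I.valueSet A ρ ⊆ W := by
  rintro v ⟨d, rfl⟩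
  exact hA _

end valueSet

lemma Term.eval_glue {L : Lang} {V : Set ℝ} (I : Interp L V) (ω : ℝ) (h1 : (1 : ℝ) ∈ V)
    {α : Type} (v : α → I.Dom) (t : Term L α) :
    Term.eval (I.glue ω h1) v t = Term.eval I v t := by
  induction t with
  | var i => rfl
  | func f ts ih => exact congrArg (I.funMap f) (funext ih)

lemma Interp.valueSet_glue {L : Lang} {V : Set ℝ} (I : Interp L V) (ω : ℝ) (h1 : (1 : ℝ) ∈ V)
    {n : ℕ} (ρ : Fin n → I.Dom) {A : Form L (n + 1)}
    (hA : ∀ σ, Form.val (I.glue ω h1) A σ = collapse ω (Form.val I A σ)) :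
    (I.glue ω h1).valueSet A ρ = collapse ω '' I.valueSet A ρ := by
  ext v
  constructor
  · rintro ⟨d, rfl⟩
    exact ⟨_, ⟨d, rfl⟩, (hA _).symm⟩
  · rintro ⟨_, ⟨d, rfl⟩, rfl⟩
    exact ⟨d, (hA _).symm⟩

def Interp.retype {L : Lang} {V : Set ℝ} (I : Interp L V) (W : Set ℝ)
    (hW : ∀ {k} (R : L.Rel k) (v : Fin k → I.Dom), I.relVal R v ∈ W) : Interp L W where
  Dom := I.Dom
  dom_nonempty := I.dom_nonempty
  funMap := I.funMap
  relVal := I.relVal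
  relVal_mem := hW

section retype

variable {L : Lang} {V W : Set ℝ} (I : Interp L V)
  (hW : ∀ {k} (R : L.Rel k) (v : Fin k → I.Dom), I.relVal R v ∈ W)

lemma Term.eval_retype {α : Type} (v : α → I.Dom) (t : Term L α) :
    Term.eval (I.retype W hW) v t = Term.eval I v t := by
  induction t with
  | var i => rfl
  | func f ts ih => exact congrArg (I.funMap f) (funext ih)

lemma Form.val_retype {n : ℕ} (B : Form L n) (ρ : Fin n → I.Dom) :
    Form.val (I.retype W hW) B ρ = Form.val I B ρ := by
  induction B with
  | falsum => rfl
  | atom R ts => exact congrArg (I.relVal R) (funext fun j => Term.eval_retype I hW ρ (ts j))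
  | conj A B ihA ihB => simp only [Form.val, ihA, ihB]
  | disj A B ihA ihB => simp only [Form.val, ihA, ihB]
  | impl A B ihA ihB => simp only [Form.val, ihA, ihB]
  | delta A ihA => simp only [Form.val, ihA]
  | all A ih => exact congrArg sInf (Set.ext fun v => exists_congr fun d => by rw [← ih]; rfl)
  | ex A ih => exact congrArg sSup (Set.ext fun v => exists_congr fun d => by rw [← ih]; rfl)

end retype

lemma Valid.of_subset {L : Lang} {V W : Set ℝ} (hWV : W ⊆ V) {A : Form L 0} (hA : Valid V A) :
    Valid W A := fun I =>
  (Form.val_retype I (fun R v => hWV (I.relVal_mem R v)) A Fin.elim0).symm.trans (hA _)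

section AccumulatingOnlyAtOne

variable {V : Set ℝ} (hV : V ⊆ Set.Icc 0 1) (hfin : ∀ c < 1, (V ∩ Set.Iic c).Finite)
include hV hfin

lemma exists_isLeast_of_subset {S : Set ℝ} (hS : S ⊆ V) (hne : S.Nonempty) :
    ∃ a, IsLeast S a := by
  obtain ⟨s₀, hs₀⟩ := hne
  by_cases hleast : s₀ ∈ lowerBounds S
  · exact ⟨s₀, hs₀, hleast⟩
  obtain ⟨s, hs, hss₀⟩ : ∃ s ∈ S, s < s₀ := by simpa [lowerBounds] using hleast
  have hT : (S ∩ Set.Iic s).Finite :=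
    (hfin s (hss₀.trans_le (hV (hS hs₀)).2)).subset
      (Set.inter_subset_inter_left _ hS)
  obtain ⟨a, ⟨haS, has⟩, hmin⟩ := Set.exists_min_image _ id hT ⟨s, hs, le_refl s⟩
  refine ⟨a, haS, fun x hx => ?_⟩
  rcases le_total x s with hxs | hsx
  · exact hmin x ⟨hx, hxs⟩
  · exact has.trans hsx

lemma csSup_mem_of_subset (h1 : (1 : ℝ) ∈ V) {S : Set ℝ} (hS : S ⊆ V) (hne : S.Nonempty) :
    sSup S ∈ V := by
  have hbdd : BddAbove S := bddAbove_Icc.mono (hS.trans hV)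
  rcases (csSup_le hne fun x hx => (hV (hS hx)).2).lt_or_eq with hlt | heq
  · have hSfin : S.Finite :=
      (hfin _ hlt).subset fun x hx => ⟨hS hx, le_csSup hbdd hx⟩
    exact hS (hne.csSup_mem hSfin)
  · exact heq ▸ h1

lemma Form.val_mem (h0 : (0 : ℝ) ∈ V) (h1 : (1 : ℝ) ∈ V) {L : Lang} (I : Interp L V) {n : ℕ}
    (B : Form L n) (ρ : Fin n → I.Dom) : Form.val I B ρ ∈ V := by
  induction B with
  | falsum => exact h0
  | atom R ts => exact I.relVal_mem R _
  | conj A B ihA ihB =>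
    rcases min_choice (Form.val I A ρ) (Form.val I B ρ) with h | h <;>
      simp only [Form.val, h, ihA, ihB]
  | disj A B ihA ihB =>
    rcases max_choice (Form.val I A ρ) (Form.val I B ρ) with h | h <;>
      simp only [Form.val, h, ihA, ihB]
  | impl A B ihA ihB =>
    simp only [Form.val]
    split_ifs
    exacts [h1, ihB ρ]
  | delta A ihA =>
    simp only [Form.val]
    split_ifs
    exacts [h1, h0]
  | all A ih =>
    have hsub := I.valueSet_subset ρ ih
    obtain ⟨a, ha⟩ := exists_isLeast_of_subset hV hfin hsub (I.valueSet_nonempty ρ A)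
    rw [Form.val_all, ha.csInf_eq]
    exact hsub ha.1
  | ex A ih =>
    exact csSup_mem_of_subset hV hfin h1 (I.valueSet_subset ρ ih) (I.valueSet_nonempty ρ A)

lemma Form.val_glue (h0 : (0 : ℝ) ∈ V) (h1 : (1 : ℝ) ∈ V) {L : Lang} (I : Interp L V)
    {ω : ℝ} (hω0 : 0 ≤ ω) (hω1 : ω < 1) {n : ℕ} (B : Form L n) (hB : DeltaFree B)
    (ρ : Fin n → I.Dom) : Form.val (I.glue ω h1) B ρ = collapse ω (Form.val I B ρ) := by
  have hmono := collapse_monotone hω1.le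
  induction B with
  | falsum => exact (if_pos hω0).symm
  | atom R ts =>
    exact congrArg (fun x => collapse ω (I.relVal R x))
      (funext fun j => Term.eval_glue I ω h1 ρ (ts j))
  | conj A B ihA ihB =>
    simp only [Form.val, ihA hB.1, ihB hB.2, hmono.map_min]
  | disj A B ihA ihB =>
    simp only [Form.val, ihA hB.1, ihB hB.2, hmono.map_max]
  | impl A B ihA ihB =>
    simp only [Form.val, ihA hB.1, ihB hB.2, collapse]
    split_ifs <;> linarith
  | delta A ihA => exact hB.elim
  | all A ih =>
    obtain ⟨a, ha⟩ := exists_isLeast_of_subset hV hfin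
      (I.valueSet_subset ρ (Form.val_mem hV hfin h0 h1 I A)) (I.valueSet_nonempty ρ A)
    rw [Form.val_all (I.glue ω h1) ρ, Form.val_all, I.valueSet_glue ω h1 ρ (ih hB), ha.csInf_eq,
      (hmono.map_isLeast ha).csInf_eq]
  | ex A ih =>
    rw [Form.val_ex (I.glue ω h1) ρ, Form.val_ex, I.valueSet_glue ω h1 ρ (ih hB)]
    exact collapse_csSup hω1 (I.valueSet_nonempty ρ A)
      (bddAbove_Icc.mono ((I.valueSet_subset ρ (Form.val_mem hV hfin h0 h1 I A)).trans hV))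

end AccumulatingOnlyAtOne

lemma Vup_subset_Icc : Vup ⊆ Set.Icc 0 1 := by
  rintro x (⟨k, hk, rfl⟩ | rfl)
  · have hk0 : (0 : ℝ) < k := by exact_mod_cast hk
    have hk1 : (1 : ℝ) ≤ k := by exact_mod_cast hk
    exact ⟨sub_nonneg.mpr ((div_le_one hk0).mpr hk1), sub_le_self 1 (by positivity)⟩
  · exact ⟨zero_le_one, le_rfl⟩

lemma zero_mem_Vup : (0 : ℝ) ∈ Vup := Or.inl ⟨1, le_rfl, by norm_num⟩

lemma one_mem_Vup : (1 : ℝ) ∈ Vup := Or.inr rfl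

lemma Vfin_subset_Vup (m : ℕ) : Vfin m ⊆ Vup := by
  rintro x (⟨k, hk, -, rfl⟩ | rfl)
  · exact Or.inl ⟨k, hk, rfl⟩
  · exact Or.inr rfl

lemma finite_Vup_inter_Iic {c : ℝ} (hc : c < 1) : (Vup ∩ Set.Iic c).Finite := by
  refine ((Set.finite_Iic ⌈1 / (1 - c)⌉₊).image fun k : ℕ => 1 - 1 / (k : ℝ)).subset ?_
  rintro x ⟨⟨k, hk, rfl⟩ | rfl, hxc⟩
  · have hk0 : (0 : ℝ) < k := by exact_mod_cast hk
    have hxc : 1 - c ≤ 1 / (k : ℝ) := by simp only [Set.mem_Iic] at hxc; linarith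
    have hkc : (k : ℝ) ≤ 1 / (1 - c) := by
      rw [le_div_iff₀ (by linarith)]
      rw [le_div_iff₀ hk0] at hxc
      linarith
    exact ⟨k, by exact_mod_cast hkc.trans (Nat.le_ceil _), rfl⟩
  · exact absurd hxc (not_le.mpr hc)

lemma mem_Vfin_succ_of_le {x : ℝ} (hx : x ∈ Vup) {k : ℕ} (hk : 1 ≤ k)
    (hle : x ≤ 1 - 1 / (k : ℝ)) : x ∈ Vfin (k + 1) := by
  have hk0 : (0 : ℝ) < k := by exact_mod_cast hk
  rcases hx with ⟨j, hj, rfl⟩ | rfl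
  · have hj0 : (0 : ℝ) < j := by exact_mod_cast hj
    have hjk : (j : ℝ) ≤ k := (one_div_le_one_div hk0 hj0).mp (by linarith)
    exact Or.inl ⟨j, hj, by exact_mod_cast hjk, rfl⟩
  · linarith [show (0 : ℝ) < 1 / k by positivity]

lemma exists_Vfin_interp_sval_ne_one {L : Lang} {A : Form L 0} (hA : DeltaFree A)
    (I : Interp L Vup) (hIA : Form.sval I A ≠ 1) :
    ∃ m, 2 ≤ m ∧ ∃ J : Interp L (Vfin m), Form.sval J A ≠ 1 := by
  have hmem : Form.sval I A ∈ Vup := Form.val_mem Vup_subset_Icc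
    (fun _ => finite_Vup_inter_Iic) zero_mem_Vup one_mem_Vup I A Fin.elim0
  obtain ⟨k, hk, hIk⟩ := hmem.resolve_right hIA
  set ω : ℝ := 1 - 1 / k
  have hω0 : 0 ≤ ω := hIk ▸ (Vup_subset_Icc hmem).1
  have hω1 : ω < 1 := sub_lt_self 1 (one_div_pos.mpr (by exact_mod_cast hk))
  let J := I.glue ω one_mem_Vup
  have hJ : ∀ {j} (R : L.Rel j) (v : Fin j → J.Dom), J.relVal R v ∈ Vfin (k + 1) := by
    intro j R v
    show collapse ω (I.relVal R v) ∈ Vfin (k + 1)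
    unfold collapse
    split_ifs with h
    · exact mem_Vfin_succ_of_le (I.relVal_mem R v) hk h
    · exact Or.inr rfl
  have hJA : Form.val J A Fin.elim0 = ω :=
    (Form.val_glue Vup_subset_Icc (fun _ => finite_Vup_inter_Iic) zero_mem_Vup one_mem_Vup I
      hω0 hω1 A hA Fin.elim0).trans (by rw [← Form.sval, hIk, collapse, if_pos le_rfl])
  refine ⟨k + 1, by omega, J.retype _ hJ, ?_⟩
  exact ((Form.val_retype J hJ A Fin.elim0).trans hJA).trans_ne hω1.ne

/-- `G_{V_↑}` is the intersection of all finite-valued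
first-order Gödel logics: a sentence is valid in `G_{V_↑}` iff it is valid in
`G_{V_m}` for every `m ≥ 2`. -/
theorem stmt_4 {L : Lang} (A : Form L 0) (hA : DeltaFree A) :
    Valid Vup A ↔ ∀ m : ℕ, 2 ≤ m → Valid (Vfin m) A := by
  refine ⟨fun h m _ => h.of_subset (Vfin_subset_Vup m), fun h I => ?_⟩
  by_contra hIA
  obtain ⟨m, hm, J, hJ⟩ := exists_Vfin_interp_sval_ne_one hA I hIA
  exact hJ (h m hm J)

end GodelPaper
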